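/- Let P_1,…,P_n be polytopes in ℝ^d. For each 0 ≤ k ≤ d−1 and n ≥ 1, the number of k-dimensional faces of P_1 + ⋯ + P_n is bounded by f_k(P_1 + ⋯ + P_n) ≤ Σ ∏_{i=1}^n C(f_0(P_i), s_i), where the sum ranges over all integer tuples (s_1,…,s_n) with 1 ≤ s_i ≤ f_0(P_i) for each i and s_1 + ⋯ + s_n = k + n, and C denotes the binomial coefficient. -/

import Mathlib

open Pointwise RealInnerProductSpace

noncomputable section

abbrev E (d : ℕ) : Type := EuclideanSpace ℝ (Fin d)

def IsPolytope {d : ℕ} (P : Set (E d)) : Prop :=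
  ∃ V : Finset (E d), V.Nonempty ∧ P = convexHull ℝ (V : Set (E d))

def maximizers {d : ℕ} (P : Set (E d)) (c : E d) : Set (E d) :=
  {x ∈ P | ∀ y ∈ P, ⟪y, c⟫ ≤ ⟪x, c⟫}

def IsFace {d : ℕ} (P F : Set (E d)) : Prop :=
  F = ∅ ∨ F = P ∨ ∃ c : E d, c ≠ 0 ∧ F = maximizers P c

def IsNontrivialFace {d : ℕ} (P F : Set (E d)) : Prop :=
  IsFace P F ∧ F ≠ ∅ ∧ F ≠ P

def polarDual {d : ℕ} (P : Set (E d)) : Set (E d) :=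
  {x | ∀ y ∈ P, ⟪x, y⟫ ≤ 1}

def dualFace {d : ℕ} (P F : Set (E d)) : Set (E d) :=
  {x ∈ polarDual P | ∀ f ∈ F, ⟪x, f⟫ = 1}

def normalCone {d : ℕ} (P F : Set (E d)) : Set (E d) :=
  {c | maximizers P c = F}

def IsPerfectlyCentered {d : ℕ} (P : Set (E d)) : Prop :=
  ∀ F : Set (E d), IsFace P F → F.Nonempty →
    (intrinsicInterior ℝ F ∩ normalCone P F).Nonempty

def dimSet {d : ℕ} (F : Set (E d)) : ℕ :=
  Module.finrank ℝ (affineSpan ℝ F).direction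

def fVec {d : ℕ} (P : Set (E d)) (k : ℕ) : ℕ :=
  {F : Set (E d) | IsFace P F ∧ F.Nonempty ∧ dimSet F = k}.ncard

/-!
A nonempty face `F` of `P₁ + ⋯ + Pₙ` maximizes some linear functional, so it is the sum
`G₁ + ⋯ + Gₙ` of the faces of the `Pᵢ` maximizing the same functional, and each `Gᵢ` is the convex
hull of the vertices of `Pᵢ` it contains. Fixing a base vertex in each `Gᵢ` and extracting a basis
of the direction of `F` from the differences of vertices with the base vertices gives nonempty
vertex sets `Tᵢ ⊆ Gᵢ` with `∑ |Tᵢ| = dim F + n` whose sum still spans the affine hull of `F`.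
As `F = (P₁ + ⋯ + Pₙ) ∩ aff F`, the tuple `(Tᵢ)` determines `F`, and counting tuples of vertex
subsets of sizes `sᵢ ≥ 1` with `∑ sᵢ = k + n` gives the bound.
-/

open Module Finset

section VectorSpan

variable {ι K V : Type*} [Fintype ι] [Field K] [AddCommGroup V] [Module K V]

theorem Submodule.finrank_iSup_le_sum [FiniteDimensional K V] (W : ι → Submodule K V) :
    finrank K ↥(⨆ i, W i) ≤ ∑ i, finrank K ↥(W i) := by
  classical
  rw [← Finset.sup_univ_eq_iSup]
  induction (Finset.univ : Finset ι) using Finset.induction_on with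
  | empty => simp
  | insert i s hi ih =>
    rw [Finset.sup_insert, Finset.sum_insert hi]
    exact (Submodule.finrank_add_le_finrank_add_finrank _ _).trans (by gcongr)

theorem finrank_vectorSpan_add_one_le_card {S : Finset V} (hS : S.Nonempty) :
    finrank K (vectorSpan K (S : Set V)) + 1 ≤ #S := by
  classical
  have hS' := hS.card_pos
  have := finrank_vectorSpan_image_finset_le K id S (n := #S - 1) (by omega)
  rw [Finset.image_id] at this
  omega

theorem finrank_iSup_vectorSpan_add_card_le [FiniteDimensional K V] (T : ι → Finset V)
    (hT : ∀ i, (T i).Nonempty) :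
    finrank K ↥(⨆ i, vectorSpan K (T i : Set V)) + Fintype.card ι ≤ ∑ i, #(T i) :=
  calc _ ≤ ∑ i, finrank K (vectorSpan K (T i : Set V)) + Fintype.card ι := by
        gcongr; exact Submodule.finrank_iSup_le_sum _
    _ = ∑ i, (finrank K (vectorSpan K (T i : Set V)) + 1) := by
        simp [Finset.sum_add_distrib]
    _ ≤ _ := Finset.sum_le_sum fun i _ => finrank_vectorSpan_add_one_le_card (hT i)

theorem vectorSpan_add {A B : Set V} (hA : A.Nonempty) (hB : B.Nonempty) :
    vectorSpan K (A + B) = vectorSpan K A ⊔ vectorSpan K B := by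
  obtain ⟨a₀, ha₀⟩ := hA
  obtain ⟨b₀, hb₀⟩ := hB
  refine le_antisymm ?_ (sup_le ?_ ?_) <;> rw [vectorSpan_def, Submodule.span_le]
  · rintro _ ⟨_, ⟨a, ha, b, hb, rfl⟩, _, ⟨a', ha', b', hb', rfl⟩, rfl⟩
    show a + b - (a' + b') ∈ _
    rw [add_sub_add_comm]
    exact add_mem (Submodule.mem_sup_left (vsub_mem_vectorSpan K ha ha'))
      (Submodule.mem_sup_right (vsub_mem_vectorSpan K hb hb'))
  · rintro _ ⟨a, ha, a', ha', rfl⟩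
    show a - a' ∈ _
    rw [← add_sub_add_right_eq_sub a a' b₀]
    exact vsub_mem_vectorSpan K (Set.add_mem_add ha hb₀) (Set.add_mem_add ha' hb₀)
  · rintro _ ⟨b, hb, b', hb', rfl⟩
    show b - b' ∈ _
    rw [← add_sub_add_left_eq_sub b b' a₀]
    exact vsub_mem_vectorSpan K (Set.add_mem_add ha₀ hb) (Set.add_mem_add ha₀ hb')

theorem Set.Nonempty.finsetSum {ι' : Type*} {A : ι' → Set V} (s : Finset ι')
    (hA : ∀ i ∈ s, (A i).Nonempty) : (∑ i ∈ s, A i).Nonempty := by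
  choose! g hg using hA
  exact ⟨∑ i ∈ s, g i, Set.finsetSum_mem_finsetSum s A g hg⟩

theorem vectorSpan_sum {A : ι → Set V} (hA : ∀ i, (A i).Nonempty) :
    vectorSpan K (∑ i, A i) = ⨆ i, vectorSpan K (A i) := by
  classical
  rw [← Finset.sup_univ_eq_iSup]
  induction (Finset.univ : Finset ι) using Finset.induction_on with
  | empty => exact vectorSpan_singleton K (0 : V)
  | insert i s hi ih =>
    rw [Finset.sum_insert hi, Finset.sup_insert,
      vectorSpan_add (hA i) (Set.Nonempty.finsetSum s fun j _ => hA j), ih]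

theorem exists_subsets_iSup_vectorSpan_eq [FiniteDimensional K V] [DecidableEq V]
    (W : ι → Finset V) (hW : ∀ i, (W i).Nonempty) :
    ∃ T : ι → Finset V, (∀ i, T i ⊆ W i) ∧ (∀ i, (T i).Nonempty) ∧
      ⨆ i, vectorSpan K (T i : Set V) = ⨆ i, vectorSpan K (W i : Set V) ∧
      ∑ i, #(T i) ≤ finrank K ↥(⨆ i, vectorSpan K (W i : Set V)) + Fintype.card ι := by
  classical
  choose u hu using hW
  -- The differences `w - u i` span the same space; keep a linearly independent spanning part.
  let v : ι × V → V := fun p => p.2 - u p.1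
  let t : Set (ι × V) := {p | p.2 ∈ W p.1}
  have ht : t.Finite := (Set.finite_univ.prod (Finset.univ.biUnion W).finite_toSet).subset
    fun p hp => ⟨trivial, Finset.mem_biUnion.2 ⟨p.1, Finset.mem_univ _, hp⟩⟩
  obtain ⟨b, hbt, -, htb, hli⟩ :=
    exists_linearIndepOn_extension (linearIndepOn_empty K v) (Set.empty_subset t)
  have hb : b.Finite := ht.subset hbt
  let J := hb.toFinset
  let T : ι → Finset V := fun i => insert (u i) ((J.filter (·.1 = i)).image Prod.snd)
  have hTW : ∀ i, T i ⊆ W i := by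
    intro i
    refine Finset.insert_subset (hu i) fun w hw => ?_
    obtain ⟨p, hp, rfl⟩ := Finset.mem_image.1 hw
    obtain ⟨hpJ, rfl⟩ := Finset.mem_filter.1 hp
    exact hbt (hb.mem_toFinset.1 hpJ)
  have hWt : ⨆ i, vectorSpan K (W i : Set V) ≤ Submodule.span K (v '' t) := by
    refine iSup_le fun i => ?_
    rw [vectorSpan_eq_span_vsub_set_right K (Finset.mem_coe.2 (hu i))]
    exact Submodule.span_mono (by rintro _ ⟨w, hw, rfl⟩; exact ⟨(i, w), hw, rfl⟩)
  have hbT : Submodule.span K (v '' b) ≤ ⨆ i, vectorSpan K (T i : Set V) := by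
    rw [Submodule.span_le]
    rintro _ ⟨p, hp, rfl⟩
    have hpT : p.2 ∈ T p.1 := Finset.mem_insert_of_mem
      (Finset.mem_image.2 ⟨p, Finset.mem_filter.2 ⟨hb.mem_toFinset.2 hp, rfl⟩, rfl⟩)
    exact Submodule.mem_iSup_of_mem p.1
      (vsub_mem_vectorSpan K hpT (Finset.mem_insert_self (u p.1) _))
  have hTW' : ⨆ i, vectorSpan K (T i : Set V) ≤ ⨆ i, vectorSpan K (W i : Set V) :=
    iSup_mono fun i => vectorSpan_mono K (Finset.coe_subset.2 (hTW i))
  have hJ : #J = finrank K (Submodule.span K (v '' b)) := by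
    rw [← Finset.card_image_of_injOn (s := J) (by simpa [J] using hli.injOn),
      ← finrank_span_finset_eq_card (by simpa [J] using hli.id_image), Finset.coe_image,
      hb.coe_toFinset]
  refine ⟨T, hTW, fun i => Finset.insert_nonempty _ _,
    le_antisymm hTW' (hWt.trans ((Submodule.span_le.2 htb).trans hbT)), ?_⟩
  calc ∑ i, #(T i) ≤ ∑ i, (#(J.filter (·.1 = i)) + 1) :=
        Finset.sum_le_sum fun i _ => (Finset.card_insert_le _ _).trans
          (by gcongr; exact Finset.card_image_le)
    _ = #J + Fintype.card ι := by
        rw [Finset.sum_add_distrib, Finset.card_eq_sum_card_fiberwise (f := Prod.fst)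
          (fun _ _ => Finset.mem_univ _)]
        simp
    _ ≤ _ := by
        rw [hJ]
        gcongr
        exact Submodule.finrank_mono (hbT.trans hTW')

theorem exists_subsets_affineSpan_sum_eq [FiniteDimensional K V] [DecidableEq V]
    (W : ι → Finset V) (hW : ∀ i, (W i).Nonempty) :
    ∃ T : ι → Finset V, (∀ i, T i ⊆ W i) ∧ (∀ i, (T i).Nonempty) ∧
      affineSpan K (∑ i, (T i : Set V)) = affineSpan K (∑ i, (W i : Set V)) ∧
      ∑ i, #(T i) = finrank K (vectorSpan K (∑ i, (W i : Set V))) + Fintype.card ι := by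
  obtain ⟨T, hTW, hT, hspan, hcard⟩ := exists_subsets_iSup_vectorSpan_eq (K := K) W hW
  have hvs : vectorSpan K (∑ i, (T i : Set V)) = vectorSpan K (∑ i, (W i : Set V)) := by
    rw [vectorSpan_sum fun i => (hT i).to_set, vectorSpan_sum fun i => (hW i).to_set, hspan]
  refine ⟨T, hTW, hT, ?_, ?_⟩
  · refine AffineSubspace.eq_of_direction_eq_of_nonempty_of_le
      (by rwa [direction_affineSpan, direction_affineSpan])
      ((Set.Nonempty.finsetSum _ fun i _ => (hT i).to_set).mono (subset_affineSpan K _))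
      (affineSpan_mono K (Set.finsetSum_subset_finsetSum _ _ _ fun i _ => hTW i))
  · rw [← hvs, vectorSpan_sum fun i => (hT i).to_set]
    refine le_antisymm ?_ (finrank_iSup_vectorSpan_add_card_le T hT)
    rwa [← hspan] at hcard

end VectorSpan

theorem ncard_le_sum_prod_choose {ι α : Type*} [Fintype ι] [DecidableEq ι] [DecidableEq α]
    (X : ι → Finset α) (m : ℕ) {𝒯 : Set (ι → Finset α)}
    (h𝒯 : ∀ T ∈ 𝒯, ∀ i, (T i).Nonempty ∧ T i ⊆ X i) (hm : ∀ T ∈ 𝒯, ∑ i, #(T i) = m) :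
    𝒯.ncard ≤ ∑ s ∈ (Fintype.piFinset fun i => Icc 1 #(X i)).filter (fun s => ∑ i, s i = m),
      ∏ i, (#(X i)).choose (s i) := by
  set B := (Fintype.piFinset fun i => Icc 1 #(X i)).filter (fun s => ∑ i, s i = m)
  have h𝒯B : 𝒯 ⊆ ↑(B.biUnion fun s => Fintype.piFinset fun i => (X i).powersetCard (s i)) := by
    intro T hT
    simp only [coe_biUnion, Set.mem_iUnion, mem_coe, Fintype.mem_piFinset, mem_powersetCard]
    refine ⟨fun i => #(T i), ?_, fun i => ⟨(h𝒯 T hT i).2, rfl⟩⟩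
    simp only [B, mem_filter, Fintype.mem_piFinset, mem_Icc]
    exact ⟨fun i => ⟨(h𝒯 T hT i).1.card_pos, card_le_card (h𝒯 T hT i).2⟩, hm T hT⟩
  calc 𝒯.ncard ≤ #(B.biUnion fun s => Fintype.piFinset fun i => (X i).powersetCard (s i)) := by
        rw [← Set.ncard_coe_finset]
        exact Set.ncard_le_ncard h𝒯B (finite_toSet _)
    _ ≤ ∑ s ∈ B, #(Fintype.piFinset fun i => (X i).powersetCard (s i)) := card_biUnion_le
    _ = ∑ s ∈ B, ∏ i, (#(X i)).choose (s i) := by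
        simp only [Fintype.card_piFinset, card_powersetCard]

section Maximizers

variable {d : ℕ}

theorem maximizers_add (A B : Set (E d)) (c : E d) :
    maximizers (A + B) c = maximizers A c + maximizers B c := by
  ext x
  constructor
  · rintro ⟨⟨a, ha, b, hb, rfl⟩, hmax⟩
    refine ⟨a, ⟨ha, fun y hy => ?_⟩, b, ⟨hb, fun y hy => ?_⟩, rfl⟩
    · simpa [inner_add_left] using hmax (y + b) (Set.add_mem_add hy hb)
    · simpa [inner_add_left] using hmax (a + y) (Set.add_mem_add ha hy)
  · rintro ⟨a, ⟨ha, hamax⟩, b, ⟨hb, hbmax⟩, rfl⟩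
    refine ⟨Set.add_mem_add ha hb, ?_⟩
    rintro _ ⟨a', ha', b', hb', rfl⟩
    simp only [inner_add_left]
    linarith [hamax a' ha', hbmax b' hb']

theorem maximizers_sum {ι : Type*} (s : Finset ι) (P : ι → Set (E d)) (c : E d) :
    maximizers (∑ i ∈ s, P i) c = ∑ i ∈ s, maximizers (P i) c := by
  classical
  induction s using Finset.induction_on with
  | empty => ext x; simp +contextual [maximizers]
  | insert i s hi ih => rw [sum_insert hi, sum_insert hi, maximizers_add, ih]

theorem isExposed_maximizers (P : Set (E d)) (c : E d) : IsExposed ℝ P (maximizers P c) :=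
  fun _ => ⟨innerSL ℝ c, by ext x; simp [maximizers, real_inner_comm]⟩

theorem isFace_maximizers (P : Set (E d)) (c : E d) : IsFace P (maximizers P c) := by
  rcases eq_or_ne c 0 with rfl | hc
  · exact Or.inr (Or.inl (by simp [maximizers]))
  · exact Or.inr (Or.inr ⟨c, hc, rfl⟩)

theorem IsFace.exists_eq_maximizers {P F : Set (E d)} (hF : IsFace P F) (hne : F.Nonempty) :
    ∃ c, F = maximizers P c := by
  rcases hF with rfl | rfl | ⟨c, -, rfl⟩
  · exact absurd hne Set.not_nonempty_empty
  · exact ⟨0, by simp [maximizers]⟩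
  · exact ⟨c, rfl⟩

theorem IsFace.isExtreme {P F : Set (E d)} (hF : IsFace P F) (hne : F.Nonempty) :
    IsExtreme ℝ P F := by
  obtain ⟨c, rfl⟩ := hF.exists_eq_maximizers hne
  exact (isExposed_maximizers P c).isExtreme

theorem IsFace.eq_inter_affineSpan {P F : Set (E d)} (hF : IsFace P F) (hne : F.Nonempty) :
    F = P ∩ affineSpan ℝ F := by
  obtain ⟨c, rfl⟩ := hF.exists_eq_maximizers hne
  obtain ⟨f, hf⟩ := hne
  refine (Set.subset_inter (fun x hx => hx.1) (subset_affineSpan ℝ _)).antisymm ?_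
  rintro y ⟨hyP, hyA⟩
  have hker : vectorSpan ℝ (maximizers P c) ≤ LinearMap.ker (innerₛₗ ℝ c) := by
    rw [vectorSpan_def, Submodule.span_le]
    rintro _ ⟨a, ha, b, hb, rfl⟩
    have : ⟪a, c⟫ = ⟪b, c⟫ := le_antisymm (hb.2 a ha.1) (ha.2 b hb.1)
    simp [inner_sub_right, real_inner_comm a c, real_inner_comm b c, this]
  have hyf : y -ᵥ f ∈ vectorSpan ℝ (maximizers P c) := by
    rw [← direction_affineSpan]
    exact AffineSubspace.vsub_mem_direction hyA (subset_affineSpan ℝ _ hf)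
  have hy : ⟪y, c⟫ = ⟪f, c⟫ := by
    have := hker hyf
    rw [LinearMap.mem_ker, innerₛₗ_apply_apply, vsub_eq_sub, inner_sub_right,
      real_inner_comm y c, real_inner_comm f c] at this
    linarith
  exact ⟨hyP, fun z hz => hy ▸ hf.2 z hz⟩

end Maximizers

namespace IsPolytope

variable {d : ℕ} {P : Set (E d)}

theorem isCompact (hP : IsPolytope P) : IsCompact P := by
  obtain ⟨V, -, rfl⟩ := hP
  exact V.finite_toSet.isCompact_convexHull (𝕜 := ℝ)

theorem convex (hP : IsPolytope P) : Convex ℝ P := by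
  obtain ⟨V, -, rfl⟩ := hP
  exact convex_convexHull ℝ _

theorem finite_extremePoints (hP : IsPolytope P) : (P.extremePoints ℝ).Finite := by
  obtain ⟨V, -, rfl⟩ := hP
  exact V.finite_toSet.subset extremePoints_convexHull_subset

/-- Krein–Milman, with the extreme points of the face found among those of `P`. -/
theorem maximizers_eq_convexHull (hP : IsPolytope P) (c : E d) :
    maximizers P c = convexHull ℝ (P.extremePoints ℝ ∩ maximizers P c) := by
  have hG := isExposed_maximizers P c
  have hconv := hG.convex hP.convex
  refine Set.Subset.antisymm ?_ (convexHull_min Set.inter_subset_right hconv)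
  calc maximizers P c = closure (convexHull ℝ ((maximizers P c).extremePoints ℝ)) :=
        (closure_convexHull_extremePoints (hG.isCompact hP.isCompact) hconv).symm
    _ ⊆ closure (convexHull ℝ (P.extremePoints ℝ ∩ maximizers P c)) := by
        rw [hG.isExtreme.extremePoints_eq, Set.inter_comm]
    _ = _ :=
        ((hP.finite_extremePoints.subset Set.inter_subset_left).isClosed_convexHull ℝ).closure_eq

theorem isFace_singleton (hP : IsPolytope P) {x : E d} (hx : x ∈ P.extremePoints ℝ) :
    IsFace P {x} := by
  have hP_eq : P = convexHull ℝ (P.extremePoints ℝ) := by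
    simpa [maximizers, Set.inter_eq_left.2 extremePoints_subset] using
      hP.maximizers_eq_convexHull 0
  have hx' : x ∉ convexHull ℝ (P.extremePoints ℝ \ {x}) := fun h =>
    (hP.convex.mem_extremePoints_iff_mem_sdiff_convexHull_sdiff.1 hx).2
      (convexHull_mono (Set.sdiff_subset_sdiff_left extremePoints_subset) h)
  obtain ⟨f, u, hfu, hux⟩ := geometric_hahn_banach_closed_point (convex_convexHull ℝ _)
    (hP.finite_extremePoints.sdiff.isClosed_convexHull ℝ) hx'
  set c := (InnerProductSpace.toDual ℝ (E d)).symm f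
  have hc : ∀ y, ⟪y, c⟫ = f y := fun y => by
    rw [real_inner_comm]; exact InnerProductSpace.toDual_symm_apply
  have hlt : ∀ y ∈ P.extremePoints ℝ, y ≠ x → f y < f x := fun y hy hyx =>
    (hfu y (subset_convexHull ℝ _ ⟨hy, hyx⟩)).trans hux
  have hxmax : x ∈ maximizers P c := by
    refine ⟨extremePoints_subset hx, fun y hy => ?_⟩
    rw [hc, hc]
    refine convexHull_min (fun z hz => ?_) (convex_halfSpace_le f.isLinear (f x)) (hP_eq ▸ hy)
    rcases eq_or_ne z x with rfl | hzx
    exacts [le_refl (f z), (hlt z hz hzx).le]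
  have hunique : P.extremePoints ℝ ∩ maximizers P c = {x} := by
    refine Set.eq_singleton_iff_unique_mem.2 ⟨⟨hx, hxmax⟩, fun y ⟨hy, hymax⟩ => ?_⟩
    by_contra hyx
    have := hymax.2 x hxmax.1
    rw [hc, hc] at this
    exact (hlt y hy hyx).not_ge this
  rw [← convexHull_singleton (𝕜 := ℝ) x, ← hunique, ← hP.maximizers_eq_convexHull]
  exact isFace_maximizers P c

theorem fVec_zero (hP : IsPolytope P) : fVec P 0 = (P.extremePoints ℝ).ncard := by
  have : {F | IsFace P F ∧ F.Nonempty ∧ dimSet F = 0} = (fun x => {x}) '' P.extremePoints ℝ := by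
    ext F
    constructor
    · rintro ⟨hF, ⟨x, hx⟩, h0⟩
      rw [dimSet, Submodule.finrank_eq_zero, direction_affineSpan,
        vectorSpan_eq_bot_iff_subsingleton] at h0
      obtain rfl := h0.eq_singleton_of_mem hx
      exact ⟨x, (hF.isExtreme ⟨x, rfl⟩).extremePoints_subset_extremePoints (by simp), rfl⟩
    · rintro ⟨x, hx, rfl⟩
      exact ⟨hP.isFace_singleton hx, Set.singleton_nonempty x,
        by simp [dimSet, direction_affineSpan]⟩
  rw [fVec, this, Set.ncard_image_of_injective _ Set.singleton_injective]

end IsPolytope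

theorem exists_extremePoints_subsets_of_isFace_sum {d : ℕ} {ι : Type*} [Fintype ι]
    {P : ι → Set (E d)} (hP : ∀ i, IsPolytope (P i)) {F : Set (E d)} (hF : IsFace (∑ i, P i) F)
    (hne : F.Nonempty) :
    ∃ T : ι → Finset (E d), (∀ i, (T i).Nonempty ∧ ↑(T i) ⊆ (P i).extremePoints ℝ) ∧
      ∑ i, #(T i) = dimSet F + Fintype.card ι ∧
      affineSpan ℝ (∑ i, (T i : Set (E d))) = affineSpan ℝ F := by
  classical
  obtain ⟨c, rfl⟩ := hF.exists_eq_maximizers hne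
  let W : ι → Finset (E d) := fun i =>
    ((hP i).finite_extremePoints.subset Set.inter_subset_left :
      ((P i).extremePoints ℝ ∩ maximizers (P i) c).Finite).toFinset
  have hF_eq : maximizers (∑ i, P i) c = convexHull ℝ (∑ i, (W i : Set (E d))) := by
    simp only [maximizers_sum, convexHull_sum, W, Set.Finite.coe_toFinset,
      ← (hP _).maximizers_eq_convexHull]
  have hW : ∀ i, (W i).Nonempty := by
    rw [hF_eq, convexHull_nonempty_iff] at hne
    obtain ⟨x, hx⟩ := hne
    obtain ⟨g, hg, -⟩ := (Set.mem_fintype_sum _ x).1 hx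
    exact fun i => ⟨g i, hg i⟩
  obtain ⟨T, hTW, hT, hspan, hcard⟩ := exists_subsets_affineSpan_sum_eq (K := ℝ) W hW
  refine ⟨T, fun i => ⟨hT i, fun x hx => ?_⟩, ?_, ?_⟩
  · simpa [W] using (Set.Finite.mem_toFinset _).1 (hTW i hx) |>.1
  · rw [hcard, dimSet, hF_eq, affineSpan_convexHull, direction_affineSpan]
  · rw [hspan, hF_eq, affineSpan_convexHull]

theorem trivial_upper_bound_faces_general {d n : ℕ} (P : Fin n → Set (E d))
    (hP : ∀ i, IsPolytope (P i)) (k : ℕ) :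
    fVec (∑ i, P i) k ≤
      ∑ s ∈ (Fintype.piFinset fun i => Finset.Icc 1 (fVec (P i) 0)).filter
          (fun s => ∑ i, s i = k + n),
        ∏ i, Nat.choose (fVec (P i) 0) (s i) := by
  classical
  let X : Fin n → Finset (E d) := fun i => (hP i).finite_extremePoints.toFinset
  have hX : ∀ i, fVec (P i) 0 = #(X i) := fun i => by
    rw [(hP i).fVec_zero, Set.ncard_eq_toFinset_card _ (hP i).finite_extremePoints]
  simp only [hX]
  let faces := {F | IsFace (∑ i, P i) F ∧ F.Nonempty ∧ dimSet F = k}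
  have hcert : ∀ F ∈ faces, ∃ T : Fin n → Finset (E d), (∀ i, (T i).Nonempty ∧ T i ⊆ X i) ∧
      ∑ i, #(T i) = k + n ∧ affineSpan ℝ (∑ i, (T i : Set (E d))) = affineSpan ℝ F := by
    rintro F ⟨hF, hne, rfl⟩
    obtain ⟨T, hT, hcard, hspan⟩ := exists_extremePoints_subsets_of_isFace_sum hP hF hne
    exact ⟨T, fun i => ⟨(hT i).1, by simpa [X, ← Finset.coe_subset] using (hT i).2⟩,
      by simpa using hcard, hspan⟩
  choose! cert hcert_sub hcert_card hcert_span using hcert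
  have hinj : Set.InjOn cert faces := fun F hF F' hF' h => by
    rw [hF.1.eq_inter_affineSpan hF.2.1, hF'.1.eq_inter_affineSpan hF'.2.1,
      ← hcert_span F hF, ← hcert_span F' hF', h]
  calc fVec (∑ i, P i) k = (cert '' faces).ncard := hinj.ncard_image.symm
    _ ≤ _ := ncard_le_sum_prod_choose X (k + n) (by rintro _ ⟨F, hF, rfl⟩; exact hcert_sub F hF)
        (by rintro _ ⟨F, hF, rfl⟩; exact hcert_card F hF)

theorem trivial_upper_bound_faces {d n : ℕ} (P : Fin n → Set (E d))
    (hP : ∀ i, IsPolytope (P i)) (hn : 1 ≤ n) (k : ℕ) (hk : k + 1 ≤ d) :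
    fVec (∑ i, P i) k ≤
      ∑ s ∈ (Fintype.piFinset fun i => Finset.Icc 1 (fVec (P i) 0)).filter
          (fun s => ∑ i, s i = k + n),
        ∏ i, Nat.choose (fVec (P i) 0) (s i) :=
  trivial_upper_bound_faces_general P hP k
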